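/- arXiv:2005.09013 — 2 statements merged into one kernel-verified Lean document; each statement's English description precedes it below -/
import Mathlib

section
/- For all natural numbers n and k, the n-fold iterate of Φ applied to the constant-zero function satisfies Φⁿ(0)(false, k) = ((k+1)/(k+2)) · ∑_{i=2}^{n} ((k+i)²)⁻¹, where the sum is over integers i with 2 ≤ i ≤ n (empty, hence 0, for n ≤ 1). (This is the closed form for the weakest-preexpectation fixpoint iterates of the example loop.) -/
open scoped ENNReal

/-- The weakest-(liberal-)preexpectation characteristic functional of the paper's example
loop: with counter `k`, the loop body terminates with probability `1/(k+2)²` while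
issuing score `(k+1)/(k+2)`, and otherwise increments `k` and repeats. -/
noncomputable def Phi (X : Bool × ℕ → ℝ≥0∞) : Bool × ℕ → ℝ≥0∞ := fun p =>
  match p with
  | (true, _) => 1
  | (false, k) =>
      (((k : ℝ≥0∞) + 1) / ((k : ℝ≥0∞) + 2) ^ 3) * X (true, k + 1) +
        ((((k : ℝ≥0∞) + 2) ^ 2 - 1) / ((k : ℝ≥0∞) + 2) ^ 2) * X (false, k + 1)

lemma phi_true (n k : ℕ) : Phi^[n + 1] 0 (true, k) = 1 := by
  rw [Function.iterate_succ_apply']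
  rfl

lemma aux_ne_top (k : ℕ) : ((k : ℝ≥0∞) + 2) ≠ ⊤ := by
  simp [ENNReal.add_ne_top]

lemma aux_ne_zero (k : ℕ) : ((k : ℝ≥0∞) + 2) ≠ 0 := by
  intro h
  rw [add_eq_zero] at h
  exact two_ne_zero h.2

/-- Closed form for the weakest-preexpectation fixpoint iterates of the example loop:
`Φⁿ(0)(false, k) = ((k+1)/(k+2)) · ∑_{i=2}^{n} 1/(k+i)²`. -/
theorem phi_iterate_zero_closed_form (n k : ℕ) :
    Phi^[n] 0 (false, k) =
      (((k : ℝ≥0∞) + 1) / ((k : ℝ≥0∞) + 2)) *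
        ∑ i ∈ Finset.Icc 2 n, (((k : ℝ≥0∞) + (i : ℝ≥0∞)) ^ 2)⁻¹ := by
  induction n generalizing k with
  | zero => simp
  | succ m ih =>
    rw [Function.iterate_succ_apply']
    cases m with
    | zero => simp [Phi]
    | succ m' =>
      have hA : Phi (Phi^[m' + 1] 0) (false, k) =
          (((k : ℝ≥0∞) + 1) / ((k : ℝ≥0∞) + 2) ^ 3) * Phi^[m' + 1] 0 (true, k + 1) +
            ((((k : ℝ≥0∞) + 2) ^ 2 - 1) / ((k : ℝ≥0∞) + 2) ^ 2) *
              Phi^[m' + 1] 0 (false, k + 1) := rfl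
      rw [hA, phi_true, ih (k + 1)]
      set a : ℝ≥0∞ := (k : ℝ≥0∞) with ha
      have hcast : ((k + 1 : ℕ) : ℝ≥0∞) = a + 1 := by push_cast; ring
      rw [hcast]
      -- shift the sum
      have hsum : ∑ i ∈ Finset.Icc 2 (m' + 1), ((a + 1 + (i : ℝ≥0∞)) ^ 2)⁻¹ =
          ∑ i ∈ Finset.Icc 3 (m' + 2), ((a + (i : ℝ≥0∞)) ^ 2)⁻¹ := by
        rw [show (3 : ℕ) = 2 + 1 from rfl, show m' + 2 = (m' + 1) + 1 from rfl,
          ← Finset.map_add_right_Icc, Finset.sum_map]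
        apply Finset.sum_congr rfl
        intro i _
        simp only [addRightEmbedding_apply]
        push_cast
        ring_nf
      rw [hsum]
      -- split the right-hand sum
      have hsplit : ∑ i ∈ Finset.Icc 2 (m' + 2), ((a + (i : ℝ≥0∞)) ^ 2)⁻¹ =
          ((a + 2) ^ 2)⁻¹ + ∑ i ∈ Finset.Icc 3 (m' + 2), ((a + (i : ℝ≥0∞)) ^ 2)⁻¹ := by
        have hins : Finset.Icc 2 (m' + 2) = insert 2 (Finset.Icc 3 (m' + 2)) := by
          ext x; simp only [Finset.mem_Icc, Finset.mem_insert]; omega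
        rw [hins, Finset.sum_insert (by simp)]
        norm_num
      rw [hsplit]
      set S : ℝ≥0∞ := ∑ i ∈ Finset.Icc 3 (m' + 2), ((a + (i : ℝ≥0∞)) ^ 2)⁻¹ with hS
      -- now pure arithmetic
      have h2t : (a + 2) ≠ ⊤ := aux_ne_top k
      have h20 : (a + 2) ≠ 0 := aux_ne_zero k
      have h3t : (a + 3) ≠ ⊤ := by simp [ENNReal.add_ne_top, ha]
      have h30 : (a + 3) ≠ 0 := by
        intro h
        rw [add_eq_zero] at h
        exact three_ne_zero h.2
      have hsub : (a + 2) ^ 2 - 1 = (a + 1) * (a + 3) := by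
        apply ENNReal.sub_eq_of_eq_add ENNReal.one_ne_top
        ring
      rw [hsub]
      rw [div_eq_mul_inv, div_eq_mul_inv, div_eq_mul_inv, div_eq_mul_inv]
      have hinv3 : ((a + 2) ^ 3)⁻¹ = (a + 2)⁻¹ * (a + 2)⁻¹ * (a + 2)⁻¹ := by
        rw [ENNReal.inv_pow]; ring
      have hinv2 : ((a + 2) ^ 2)⁻¹ = (a + 2)⁻¹ * (a + 2)⁻¹ := by
        rw [ENNReal.inv_pow]; ring
      have hc2 : (a + 2) * (a + 2)⁻¹ = 1 := ENNReal.mul_inv_cancel h20 h2t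
      have hc3 : (a + 3) * (a + 3)⁻¹ = 1 := ENNReal.mul_inv_cancel h30 h3t
      calc (a + 1) * ((a + 2) ^ 3)⁻¹ * 1 +
            (a + 1) * (a + 3) * ((a + 2) ^ 2)⁻¹ *
              ((a + 1 + 1) * (a + 1 + 2)⁻¹ * S)
          = (a + 1) * ((a + 2)⁻¹ * (a + 2)⁻¹ * (a + 2)⁻¹) +
              ((a + 3) * (a + 3)⁻¹) * ((a + 2) * (a + 2)⁻¹) *
                ((a + 1) * ((a + 2)⁻¹ * S)) := by
            rw [hinv3, hinv2]
            have e1 : a + 1 + 1 = a + 2 := by ring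
            have e2 : a + 1 + 2 = a + 3 := by ring
            rw [e1, e2]; ring
        _ = (a + 1) * (a + 2)⁻¹ * (((a + 2)⁻¹ * (a + 2)⁻¹) + S) := by
            rw [hc2, hc3]; ring
        _ = (a + 1) * (a + 2)⁻¹ * (((a + 2) ^ 2)⁻¹ + S) := by rw [hinv2]
end

section
/- Let c : ℕ → ℕ be injective and let k ≥ 1 be a natural number. Then the μ-measure of the set of entropies θ ∈ S such that θ(c i) ≥ 1/(i+2)² for every i with i + 1 < k, and θ(c (k−1)) ≤ 1/(k+1)², equals 1/(2·k·(k+1)). (This is the probability that the paper's example loop performs exactly k iterations, computed from the operational semantics: the k-th termination probability is (∏_{i=1}^{k−1} ((i+1)²−1)/(i+1)²) · 1/(k+1)² = 1/(2k(k+1)).) -/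
open scoped ENNReal unitInterval
open MeasureTheory

/-- The Hilbert cube `S = ℕ → [0,1]`, the concrete entropy space. -/
abbrev Entropy : Type := ℕ → I

/-- `μ` is the countable product `⨂_{n ∈ ℕ} λ` of the uniform probability measures on
`[0,1]`: all of its finite-dimensional marginals are the corresponding finite product
measures. (This characterises the infinite product measure uniquely.) -/
def IsHilbertCubeMeasure (μ : Measure Entropy) : Prop :=
  ∀ s : Finset ℕ,
    Measure.map (fun θ (i : s) => θ i.1) μ = Measure.pi (fun _ : s => (volume : Measure I))

lemma vol_Ici (a : ℝ) (h0 : 0 ≤ a) (h1 : a ≤ 1) :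
    (volume : Measure I) {x : I | a ≤ (x : ℝ)} = ENNReal.ofReal (1 - a) := by
  have hm : MeasurableSet {x : I | a ≤ (x : ℝ)} :=
    measurableSet_Ici.preimage measurable_subtype_coe
  rw [unitInterval.volume_def, Measure.comap_apply _ Subtype.coe_injective
    (fun t ht => MeasurableSet.subtype_image measurableSet_Icc ht) _ hm]
  have himg : (Subtype.val '' {x : I | a ≤ (x : ℝ)}) = Set.Icc a 1 := by
    ext x
    simp only [Set.mem_image, Set.mem_setOf_eq, Set.mem_Icc, Subtype.exists,
      Set.mem_Icc, exists_and_left, exists_prop]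
    constructor
    · rintro ⟨y, hy, hyI, rfl⟩
      exact ⟨hy, hyI.2⟩
    · rintro ⟨hax, hx1⟩
      exact ⟨x, hax, ⟨le_trans h0 hax, hx1⟩, rfl⟩
  rw [himg, Real.volume_Icc]

lemma vol_Iic (a : ℝ) (h0 : 0 ≤ a) (h1 : a ≤ 1) :
    (volume : Measure I) {x : I | (x : ℝ) ≤ a} = ENNReal.ofReal a := by
  have hm : MeasurableSet {x : I | (x : ℝ) ≤ a} :=
    measurableSet_Iic.preimage measurable_subtype_coe
  rw [unitInterval.volume_def, Measure.comap_apply _ Subtype.coe_injective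
    (fun t ht => MeasurableSet.subtype_image measurableSet_Icc ht) _ hm]
  have himg : (Subtype.val '' {x : I | (x : ℝ) ≤ a}) = Set.Icc 0 a := by
    ext x
    simp only [Set.mem_image, Set.mem_setOf_eq, Set.mem_Icc, Subtype.exists,
      Set.mem_Icc, exists_and_left, exists_prop]
    constructor
    · rintro ⟨y, hy, hyI, rfl⟩
      exact ⟨hyI.1, hy⟩
    · rintro ⟨h0x, hxa⟩
      exact ⟨x, hxa, ⟨h0x, le_trans hxa h1⟩, rfl⟩
  rw [himg, Real.volume_Icc, sub_zero]

lemma prod_telescope (n : ℕ) :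
    ∏ j ∈ Finset.range n, (1 - 1 / ((j : ℝ) + 2) ^ 2) = ((n : ℝ) + 2) / (2 * ((n : ℝ) + 1)) := by
  induction n with
  | zero => norm_num
  | succ n ih =>
    rw [Finset.prod_range_succ, ih]
    have h1 : ((n : ℝ) + 1) ≠ 0 := by positivity
    have h2 : ((n : ℝ) + 2) ≠ 0 := by positivity
    push_cast
    field_simp
    ring

/-- The probability that the paper's example loop performs exactly `k` iterations
(`k ≥ 1`), where the injective map `c` selects the distinct entropy coordinates consumed
by the successive random draws: the `μ`-measure of the set of entropies `θ` with
`θ(c i) ≥ 1/(i+2)²` for every `i` with `i+1 < k` and `θ(c (k−1)) ≤ 1/(k+1)²` equals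
`(∏_{i=1}^{k−1} ((i+1)²−1)/(i+1)²) · 1/(k+1)² = 1/(2k(k+1))`. -/
theorem measure_exactly_k_iterations (μ : Measure Entropy) [IsProbabilityMeasure μ]
    (hμ : IsHilbertCubeMeasure μ) (c : ℕ → ℕ) (hc : Function.Injective c)
    (k : ℕ) (hk : 1 ≤ k) :
    μ {θ : Entropy |
        (∀ i : ℕ, i + 1 < k → 1 / ((i : ℝ) + 2) ^ 2 ≤ (θ (c i) : ℝ)) ∧
        (θ (c (k - 1)) : ℝ) ≤ 1 / ((k : ℝ) + 1) ^ 2} =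
      1 / (2 * (k : ℝ≥0∞) * ((k : ℝ≥0∞) + 1)) := by
  obtain ⟨n, rfl⟩ : ∃ n, k = n + 1 := ⟨k - 1, (Nat.succ_pred_eq_of_pos hk).symm⟩
  classical
  set s : Finset ℕ := (Finset.range (n + 1)).image c with hs
  -- the bijection between `Fin (n+1)` and the chosen coordinates
  have hfmem : ∀ j : Fin (n + 1), c j.1 ∈ s := fun j =>
    Finset.mem_image_of_mem c (Finset.mem_range.mpr j.2)
  set f : Fin (n + 1) → s := fun j => ⟨c j.1, hfmem j⟩ with hf
  have hbij : Function.Bijective f := by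
    constructor
    · intro a b hab
      apply Fin.ext
      exact hc (congrArg Subtype.val hab)
    · rintro ⟨x, hx⟩
      obtain ⟨j, hj, rfl⟩ := Finset.mem_image.mp hx
      exact ⟨⟨j, Finset.mem_range.mp hj⟩, rfl⟩
  set e : Fin (n + 1) ≃ s := Equiv.ofBijective f hbij with he
  -- per-coordinate sets
  set D : Fin (n + 1) → Set I := fun j =>
    if j.1 < n then {x : I | 1 / ((j.1 : ℝ) + 2) ^ 2 ≤ (x : ℝ)}
    else {x : I | (x : ℝ) ≤ 1 / ((n : ℝ) + 2) ^ 2} with hD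
  have hDmeas : ∀ j, MeasurableSet (D j) := by
    intro j
    by_cases hj : j.1 < n
    · simp only [hD, hj, if_true]
      exact measurableSet_Ici.preimage measurable_subtype_coe
    · simp only [hD, hj, if_false]
      exact measurableSet_Iic.preimage measurable_subtype_coe
  -- rewrite the event as a preimage of a box
  have hset : {θ : Entropy |
        (∀ i : ℕ, i + 1 < n + 1 → 1 / ((i : ℝ) + 2) ^ 2 ≤ (θ (c i) : ℝ)) ∧
        (θ (c (n + 1 - 1)) : ℝ) ≤ 1 / (((n + 1 : ℕ) : ℝ) + 1) ^ 2} =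
      (fun θ (j : Fin (n + 1)) => θ (c j.1)) ⁻¹' Set.univ.pi D := by
    ext θ
    simp only [Set.mem_setOf_eq, Set.mem_preimage, Set.mem_pi, Set.mem_univ, forall_true_left,
      true_implies]
    have hcast : (((n + 1 : ℕ) : ℝ) + 1) = (n : ℝ) + 2 := by push_cast; ring
    constructor
    · rintro ⟨h1, h2⟩ j
      by_cases hj : j.1 < n
      · simp only [hD, hj, if_true, Set.mem_setOf_eq]
        exact h1 j.1 (by omega)
      · simp only [hD, hj, if_false, Set.mem_setOf_eq]
        have hjn : j.1 = n := by omega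
        rw [hjn]
        calc (θ (c n) : ℝ) ≤ 1 / ((((n + 1 : ℕ) : ℝ)) + 1) ^ 2 := h2
          _ = 1 / ((n : ℝ) + 2) ^ 2 := by rw [hcast]
    · intro h
      refine ⟨fun i hi => ?_, ?_⟩
      · have := h ⟨i, by omega⟩
        simp only [hD, show i < n by omega, if_true, Set.mem_setOf_eq] at this
        exact this
      · have := h ⟨n, by omega⟩
        simp only [hD, lt_irrefl, if_false, Set.mem_setOf_eq] at this
        calc (θ (c (n + 1 - 1)) : ℝ) ≤ 1 / ((n : ℝ) + 2) ^ 2 := this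
          _ = 1 / ((((n + 1 : ℕ) : ℝ)) + 1) ^ 2 := by rw [hcast]
  -- the pushforward along the chosen coordinates is the finite product measure
  have hmeas : Measurable (fun θ : Entropy => fun j : Fin (n + 1) => θ (c j.1)) :=
    measurable_pi_lambda _ fun j => measurable_pi_apply _
  have hmap : Measure.map (fun θ (j : Fin (n + 1)) => θ (c j.1)) μ =
      Measure.pi (fun _ : Fin (n + 1) => (volume : Measure I)) := by
    have h1 : (fun (θ : Entropy) (j : Fin (n + 1)) => θ (c j.1)) =
        (MeasurableEquiv.piCongrLeft (fun _ : s => I) e).symm ∘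
          (fun (θ : Entropy) (i : s) => θ i.1) := by
      funext θ j
      show θ (c j.1) = (Equiv.piCongrLeft (fun _ : s => I) e).symm (fun i : s => θ i.1) j
      rw [Equiv.piCongrLeft_symm_apply]
      rfl
    have hr : Measurable (fun (θ : Entropy) (i : s) => θ i.1) :=
      measurable_pi_lambda _ fun i => measurable_pi_apply _
    rw [h1, ← Measure.map_map (MeasurableEquiv.measurable _) hr, hμ s,
      ((measurePreserving_piCongrLeft (fun _ : s => (volume : Measure I)) e).symm _).map_eq]
  rw [hset, ← Measure.map_apply hmeas (MeasurableSet.univ_pi hDmeas), hmap, Measure.pi_pi]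
  -- compute the product of coordinate volumes
  have hvol : ∀ j : Fin (n + 1), (volume : Measure I) (D j) =
      if j.1 < n then ENNReal.ofReal (1 - 1 / ((j.1 : ℝ) + 2) ^ 2)
      else ENNReal.ofReal (1 / ((n : ℝ) + 2) ^ 2) := by
    intro j
    have hb : ∀ m : ℕ, 0 ≤ 1 / ((m : ℝ) + 2) ^ 2 ∧ 1 / ((m : ℝ) + 2) ^ 2 ≤ 1 := by
      intro m
      constructor
      · positivity
      · rw [div_le_one (by positivity)]
        nlinarith [Nat.cast_nonneg (α := ℝ) m]
    by_cases hj : j.1 < n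
    · simp only [hD, hj, if_true]
      exact vol_Ici _ (hb j.1).1 (hb j.1).2
    · simp only [hD, hj, if_false]
      exact vol_Iic _ (hb n).1 (hb n).2
  simp only [hvol]
  rw [Fin.prod_univ_castSucc]
  have hlast : ¬ ((Fin.last n).1 < n) := by simp
  simp only [Fin.coe_castSucc, Fin.is_lt, if_true, hlast, if_false]
  have hprod : (∏ j : Fin n, ENNReal.ofReal (1 - 1 / ((j.1 : ℝ) + 2) ^ 2)) =
      ENNReal.ofReal (((n : ℝ) + 2) / (2 * ((n : ℝ) + 1))) := by
    rw [← ENNReal.ofReal_prod_of_nonneg]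
    · rw [← prod_telescope n, Fin.prod_univ_eq_prod_range (fun j => (1 - 1 / ((j : ℝ) + 2) ^ 2))]
    · intro j _
      have : 1 / ((j.1 : ℝ) + 2) ^ 2 ≤ 1 := by
        rw [div_le_one (by positivity)]
        nlinarith [Nat.cast_nonneg (α := ℝ) j.1]
      linarith
  rw [hprod, ← ENNReal.ofReal_mul (by positivity)]
  have harg : ((n : ℝ) + 2) / (2 * ((n : ℝ) + 1)) * (1 / ((n : ℝ) + 2) ^ 2) =
      1 / (2 * ((n : ℝ) + 1) * ((n : ℝ) + 2)) := by
    have h1 : ((n : ℝ) + 1) ≠ 0 := by positivity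
    have h2 : ((n : ℝ) + 2) ≠ 0 := by positivity
    field_simp
  rw [harg]
  -- identify the `ENNReal.ofReal` value with the stated `ℝ≥0∞` expression
  rw [ENNReal.ofReal_div_of_pos (by positivity), ENNReal.ofReal_one]
  congr 1
  rw [show (2 * ((n : ℝ) + 1) * ((n : ℝ) + 2)) = ((2 * (n + 1) * (n + 2) : ℕ) : ℝ) by
    push_cast; ring, ENNReal.ofReal_natCast]
  push_cast
  ring
end
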